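/- Let V be a graded module over a commutative ring R with 2 invertible, carrying an R-bilinear Loday bracket [·,·] of degree n, i.e., a bracket with [V_i,V_j] ⊆ V_{i+j+n} satisfying the graded Jacobi identity [a,[b,c]] = [[a,b],c] + (-1)^{(n+|a|)(n+|b|)}[b,[a,c]] for homogeneous a,b,c (graded skew-symmetry is NOT assumed). Let D be a differential of odd degree k on V (D homogeneous of odd degree k, D∘D = 0, D[a,b] = [Da,b] + (-1)^{k(n+|a|)}[a,Db]). Then the derived bracket [a,b]_{(D)} := (-1)^{n+|a|+1}[Da,b] is again a Loday bracket, of degree n+k: it satisfies [a,[b,c]_{(D)}]_{(D)} = [[a,b]_{(D)},c]_{(D)} + (-1)^{(n+k+|a|)(n+k+|b|)}[b,[a,c]_{(D)}]_{(D)} for homogeneous a,b,c. -/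

import Mathlib

/-- `(-1)^m` as an integer, for `m : ℤ` (depends only on the parity of `m`). -/
def gsign (m : ℤ) : ℤ := (((-1 : ℤˣ) ^ m : ℤˣ) : ℤ)

/-- A graded Loday (Leibniz) algebra of degree `n` over a commutative ring `R`:
a `ℤ`-graded `R`-module with an `R`-bilinear bracket sending `V_i × V_j` into
`V_{i+j+n}` and satisfying the graded Jacobi identity; skew-symmetry is NOT assumed. -/
structure GradedLodayAlgebra (R : Type*) [CommRing R] (V : Type*) [AddCommGroup V]
    [Module R V] (n : ℤ) where
  grade : ℤ → Submodule R V
  bracket : V →ₗ[R] V →ₗ[R] V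
  bracket_mem : ∀ i j : ℤ, ∀ a ∈ grade i, ∀ b ∈ grade j, bracket a b ∈ grade (i + j + n)
  jacobi : ∀ i j l : ℤ, ∀ a ∈ grade i, ∀ b ∈ grade j, ∀ c ∈ grade l,
    bracket a (bracket b c)
      = bracket (bracket a b) c + gsign ((n + i) * (n + j)) • bracket b (bracket a c)

/-- `D` is a differential of odd degree `k` on the graded Loday algebra `L`. -/
structure GradedLodayAlgebra.IsDifferential {R : Type*} [CommRing R] {V : Type*}
    [AddCommGroup V] [Module R V] {n : ℤ} (L : GradedLodayAlgebra R V n)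
    (D : V →ₗ[R] V) (k : ℤ) : Prop where
  odd : Odd k
  map_mem : ∀ i : ℤ, ∀ a ∈ L.grade i, D a ∈ L.grade (i + k)
  sq_zero : ∀ a : V, D (D a) = 0
  leibniz : ∀ i j : ℤ, ∀ a ∈ L.grade i, ∀ b ∈ L.grade j,
    D (L.bracket a b) = L.bracket (D a) b + gsign (k * (n + i)) • L.bracket a (D b)

/-- The derived bracket `[a,b]_(D) = (-1)^(n+|a|+1) • [D a, b]`, for `a` homogeneous
of degree `i`. -/
def GradedLodayAlgebra.der {R : Type*} [CommRing R] {V : Type*} [AddCommGroup V]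
    [Module R V] {n : ℤ} (L : GradedLodayAlgebra R V n) (D : V →ₗ[R] V) (i : ℤ)
    (a b : V) : V :=
  gsign (n + i + 1) • L.bracket (D a) b

lemma gsign_add (a b : ℤ) : gsign (a + b) = gsign a * gsign b := by
  unfold gsign
  rw [zpow_add, Units.val_mul]

lemma gsign_mul_self (a : ℤ) : gsign a * gsign a = 1 := by
  unfold gsign
  rw [← Units.val_mul, Int.units_mul_self]
  rfl

lemma gsign_even {a : ℤ} (h : Even a) : gsign a = 1 := by
  obtain ⟨r, hr⟩ := h
  rw [hr, gsign_add, gsign_mul_self]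

lemma gsign_congr {a b : ℤ} (h : Even (a - b)) : gsign a = gsign b := by
  have : a = b + (a - b) := by ring
  rw [this, gsign_add, gsign_even h, mul_one]

/-- the derived bracket of a graded Loday bracket of degree `n` by a
differential of odd degree `k` is again a Loday bracket, of degree `n + k`: it maps
`grade i × grade j` into `grade (i+j+(n+k))` and satisfies the graded Jacobi identity
with the shifted degree. -/
theorem derived_bracket_of_loday_is_loday {R : Type*} [CommRing R] [Invertible (2 : R)]
    {V : Type*} [AddCommGroup V] [Module R V] {n k : ℤ}
    (L : GradedLodayAlgebra R V n) (D : V →ₗ[R] V) (hD : L.IsDifferential D k) :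
    (∀ i j : ℤ, ∀ a ∈ L.grade i, ∀ b ∈ L.grade j,
        L.der D i a b ∈ L.grade (i + j + (n + k))) ∧
    (∀ i j l : ℤ, ∀ a ∈ L.grade i, ∀ b ∈ L.grade j, ∀ c ∈ L.grade l,
        L.der D i a (L.der D j b c)
          = L.der D (i + j + (n + k)) (L.der D i a b) c
            + gsign ((n + k + i) * (n + k + j)) • L.der D j b (L.der D i a c)) := by
  obtain ⟨t, ht⟩ := hD.odd
  have hBl : ∀ (s : ℤ) (x y : V), L.bracket (s • x) y = s • L.bracket x y := by
    intro s x y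
    rw [map_zsmul]
    rfl
  have hBr : ∀ (s : ℤ) (x y : V), L.bracket x (s • y) = s • L.bracket x y := by
    intro s x y
    exact map_zsmul (L.bracket x) s y
  constructor
  · intro i j a ha b hb
    have h1 : L.bracket (D a) b ∈ L.grade ((i + k) + j + n) :=
      L.bracket_mem _ _ _ (hD.map_mem i a ha) _ hb
    have h2 : i + j + (n + k) = (i + k) + j + n := by ring
    rw [h2]
    exact zsmul_mem h1 _
  · intro i j l a ha b hb c hc
    have hDa := hD.map_mem i a ha
    have hDb := hD.map_mem j b hb
    -- D [Da, b] = sk • [Da, Db]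
    have hDab : D (L.bracket (D a) b)
        = gsign (k * (n + (i + k))) • L.bracket (D a) (D b) := by
      rw [hD.leibniz (i + k) j (D a) hDa b hb, hD.sq_zero]
      simp
    have hjac := L.jacobi (i + k) (j + k) l (D a) hDa (D b) hDb c hc
    set s1 := gsign (n + i + 1) with hs1
    set s2 := gsign (n + j + 1) with hs2
    set s3 := gsign (n + (i + j + (n + k)) + 1) with hs3
    set sk := gsign (k * (n + (i + k))) with hsk
    set sJ := gsign ((n + (i + k)) * (n + (j + k))) with hsJ
    set sS := gsign ((n + k + i) * (n + k + j)) with hsS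
    set P := L.bracket (L.bracket (D a) (D b)) c with hP
    set Q := L.bracket (D b) (L.bracket (D a) c) with hQ
    have hsign1 : s1 * s2 = s3 * (s1 * sk) := by
      rw [hs1, hs2, hs3, hsk, ← gsign_add, ← gsign_add, ← gsign_add]
      apply gsign_congr
      exact ⟨-t - n - i - t * n - t * i - 2 * t ^ 2 - 2 * t - 1, by subst ht; ring⟩
    have hsign2 : sJ = sS := by
      rw [hsJ, hsS]
      congr 1
      ring
    calc L.der D i a (L.der D j b c)
        = (s1 * s2) • L.bracket (D a) (L.bracket (D b) c) := by
          unfold GradedLodayAlgebra.der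
          rw [map_zsmul, mul_smul]
      _ = (s1 * s2) • P + ((s1 * s2) * sJ) • Q := by
          rw [hjac, smul_add, smul_smul]
      _ = (s3 * (s1 * sk)) • P + (sS * (s2 * s1)) • Q := by
          rw [hsign1]
          congr 1
          rw [← hsign1, hsign2]
          ring_nf
      _ = L.der D (i + j + (n + k)) (L.der D i a b) c
            + sS • L.der D j b (L.der D i a c) := by
          unfold GradedLodayAlgebra.der
          simp only [map_zsmul, LinearMap.smul_apply, hDab, smul_smul]
          rfl
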